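/- arXiv:1805.11641 — 9 statements merged into one kernel-verified Lean document; each statement's English description precedes it below -/
import Mathlib

section
/- Let α ∈ T(n,k) and let S be the set of all strings in T(n,k) that are increasable in T(n,k) to some rotation of α. Then S is closed under rotations, and every β ∈ S is increasable in S (not merely in T(n,k)) to a rotation of α. -/
namespace UCG

abbrev Str (n k : ℕ) := Fin n → Fin k

def OneUp {n k : ℕ} (β γ : Str n k) : Prop :=
  ∃ i : Fin n, β i < γ i ∧ ∀ j : Fin n, j ≠ i → β j = γ j

def IncrTo {n k : ℕ} (S : Set (Str n k)) (β α : Str n k) : Prop :=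
  β ∈ S ∧ Relation.ReflTransGen (fun x y => OneUp x y ∧ y ∈ S) β α

def IsRotation {n k : ℕ} (β γ : Str n k) : Prop :=
  ∃ j : ℕ, ∀ i : Fin n, γ i = β ⟨(i.val + j) % n, Nat.mod_lt _ i.pos⟩

def ClosedUnderRot {n k : ℕ} (S : Set (Str n k)) : Prop :=
  ∀ β ∈ S, ∀ γ, IsRotation β γ → γ ∈ S

def shift {n k : ℕ} (c : Fin k) (β : Str n k) : Str n k :=
  fun i => if i.val = 0 then c else β ⟨i.val - 1, lt_of_le_of_lt (Nat.sub_le _ _) i.isLt⟩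

def lastSym {n k : ℕ} (hn : 0 < n) (β : Str n k) : Fin k :=
  β ⟨n - 1, Nat.sub_lt hn one_pos⟩

/-- `WinIn hn S tgt β m`: in the Warden's Game with legal positions `S`, starting
from position `β`, the prisoner can force the position `tgt` to be reached within
at most `m` moves, whatever the warden does.  A move from `β = γb` is either a
warden move to `cγ ∈ S` with `c < b`, or (if the warden passes) a prisoner move
to `cγ ∈ S` with `c ≥ b`. -/
inductive WinIn {n k : ℕ} (hn : 0 < n) (S : Set (Str n k)) (tgt : Str n k) :
    Str n k → ℕ → Prop
  | passWin (β : Str n k) (m : ℕ) (c : Fin k)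
      (hc : lastSym hn β ≤ c) (hcS : shift c β ∈ S) (heq : shift c β = tgt)
      (hW : ∀ c' : Fin k, c' < lastSym hn β → shift c' β ∈ S → shift c' β ≠ tgt →
        WinIn hn S tgt (shift c' β) m) :
      WinIn hn S tgt β (m + 1)
  | passStep (β : Str n k) (m : ℕ) (c : Fin k)
      (hc : lastSym hn β ≤ c) (hcS : shift c β ∈ S)
      (hwin : WinIn hn S tgt (shift c β) m)
      (hW : ∀ c' : Fin k, c' < lastSym hn β → shift c' β ∈ S → shift c' β ≠ tgt →
        WinIn hn S tgt (shift c' β) m) :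
      WinIn hn S tgt β (m + 1)

noncomputable def remoteness {n k : ℕ} (hn : 0 < n) (S : Set (Str n k))
    (tgt β : Str n k) : ℕ∞ :=
  sInf {e : ℕ∞ | ∃ t : ℕ, e = t ∧ WinIn hn S tgt β t}

def fshift {n k : ℕ} (b : Fin k) (β : Str n k) : Str n k :=
  fun i => if h : i.val = n - 1 then b else β ⟨i.val + 1, by have := i.isLt; omega⟩

def GreedyOk {n k : ℕ} (S : Set (Str n k)) (B : ℕ → Option (Str n k)) (m : ℕ)
    (β : Str n k) (b : Fin k) : Prop :=
  fshift b β ∈ S ∧ ∀ i : ℕ, 1 ≤ i → i ≤ m → B i ≠ some (fshift b β)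

def IsGreedy {n k : ℕ} (S : Set (Str n k)) (α : Str n k)
    (B : ℕ → Option (Str n k)) : Prop :=
  B 0 = some α ∧
  (∀ m : ℕ, B m = none → B (m + 1) = none) ∧
  ∀ m : ℕ, ∀ β : Str n k, B m = some β →
    ((1 ≤ m ∧ β = α) → B (m + 1) = none) ∧
    ((m = 0 ∨ β ≠ α) →
      ((¬ ∃ b : Fin k, GreedyOk S B m β b) → B (m + 1) = none) ∧
      (∀ b : Fin k, GreedyOk S B m β b → (∀ b' : Fin k, b' < b → ¬ GreedyOk S B m β b') →
        B (m + 1) = some (fshift b β)))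

def CycSubstr {m n k : ℕ} (hn : 0 < n) (γ : Str m k) (β : Str n k) : Prop :=
  ∃ j : ℕ, ∀ i : Fin m, β ⟨(j + i.val) % n, Nat.mod_lt _ hn⟩ = γ i

def rot {n k : ℕ} (j : ℕ) (β : Str n k) : Str n k :=
  fun i => β ⟨(i.val + j) % n, Nat.mod_lt _ i.pos⟩

lemma isRotation_iff {n k : ℕ} (β γ : Str n k) :
    IsRotation β γ ↔ ∃ j, γ = rot j β := by
  constructor
  · rintro ⟨j, h⟩; exact ⟨j, funext h⟩
  · rintro ⟨j, rfl⟩; exact ⟨j, fun i => rfl⟩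

lemma rot_index_inj {n : ℕ} (j : ℕ) (l i : Fin n)
    (h : (l.val + j) % n = (i.val + j) % n) : l = i := by
  have h1 : (l.val + j) % n = (i.val + j) % n := h
  have h2 : l.val % n = i.val % n := Nat.ModEq.add_right_cancel' j h1
  have := l.isLt; have := i.isLt
  rw [Nat.mod_eq_of_lt l.isLt, Nat.mod_eq_of_lt i.isLt] at h2
  exact Fin.ext h2

lemma rot_index_surj {n : ℕ} (j : ℕ) (i : Fin n) :
    ∃ l : Fin n, (l.val + j) % n = i.val := by
  have hn : 0 < n := i.pos
  refine ⟨⟨(i.val + (n - j % n)) % n, Nat.mod_lt _ hn⟩, ?_⟩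
  have h1 := Nat.div_add_mod j n
  have h2 : j % n < n := Nat.mod_lt _ hn
  have key : i.val + (n - j % n) + j = i.val + n * (j / n + 1) := by
    have : n * (j / n + 1) = n * (j / n) + n := by ring
    omega
  calc ((i.val + (n - j % n)) % n + j) % n
      = (i.val + (n - j % n) + j) % n := Nat.mod_add_mod _ _ _
    _ = (i.val + n * (j / n + 1)) % n := by rw [key]
    _ = i.val % n := by rw [Nat.add_mul_mod_self_left]
    _ = i.val := Nat.mod_eq_of_lt i.isLt

lemma oneUp_rot {n k : ℕ} (j : ℕ) {β γ : Str n k} (h : OneUp β γ) :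
    OneUp (rot j β) (rot j γ) := by
  obtain ⟨i, hlt, heq⟩ := h
  obtain ⟨l, hl⟩ := rot_index_surj j i
  refine ⟨l, ?_, ?_⟩
  · show β ⟨(l.val + j) % n, _⟩ < γ ⟨(l.val + j) % n, _⟩
    have : (⟨(l.val + j) % n, Nat.mod_lt _ l.pos⟩ : Fin n) = i := Fin.ext hl
    rw [this]; exact hlt
  · intro m hm
    show β ⟨(m.val + j) % n, _⟩ = γ ⟨(m.val + j) % n, _⟩
    apply heq
    intro hc
    apply hm
    refine rot_index_inj j m l ?_
    rw [hl]
    exact congrArg Fin.val hc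

lemma chain_rot {n k : ℕ} (j : ℕ) {β γ : Str n k}
    (h : Relation.ReflTransGen (fun x y => OneUp x y ∧ y ∈ (Set.univ : Set (Str n k))) β γ) :
    Relation.ReflTransGen (fun x y => OneUp x y ∧ y ∈ (Set.univ : Set (Str n k)))
      (rot j β) (rot j γ) := by
  induction h with
  | refl => exact Relation.ReflTransGen.refl
  | tail _ hstep ih => exact ih.tail ⟨oneUp_rot j hstep.1, trivial⟩

lemma isRotation_trans {n k : ℕ} {α β γ : Str n k}
    (h1 : IsRotation α β) (h2 : IsRotation β γ) : IsRotation α γ := by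
  rw [isRotation_iff] at *
  obtain ⟨j1, rfl⟩ := h1
  obtain ⟨j2, rfl⟩ := h2
  refine ⟨j1 + j2, funext fun i => ?_⟩
  show α ⟨((i.val + j2) % n + j1) % n, _⟩ = α ⟨(i.val + (j1 + j2)) % n, _⟩
  congr 1
  apply Fin.ext
  show ((i.val + j2) % n + j1) % n = (i.val + (j1 + j2)) % n
  rw [Nat.mod_add_mod]
  ring_nf

/-- the set of strings increasable in `T(n,k)` to a rotation of `α`
is closed under rotations, and each of its members is increasable *within that set*
to a rotation of `α`. -/
theorem incr_closure_rotation {n k : ℕ} (α : Str n k) :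
    ClosedUnderRot {δ : Str n k | ∃ γ, IsRotation α γ ∧ IncrTo Set.univ δ γ} ∧
    ∀ β ∈ {δ : Str n k | ∃ γ, IsRotation α γ ∧ IncrTo Set.univ δ γ},
      ∃ γ, IsRotation α γ ∧
        IncrTo {δ : Str n k | ∃ γ', IsRotation α γ' ∧ IncrTo Set.univ δ γ'} β γ := by
  set S := {δ : Str n k | ∃ γ, IsRotation α γ ∧ IncrTo Set.univ δ γ} with hS
  constructor
  · rintro β ⟨γ, hαγ, hmem, hchain⟩ β' hββ'
    rw [isRotation_iff] at hββ'
    obtain ⟨j, rfl⟩ := hββ'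
    exact ⟨rot j γ, isRotation_trans hαγ ⟨j, fun i => rfl⟩,
      trivial, chain_rot j hchain⟩
  · rintro β ⟨γ, hαγ, hβmem, hchain⟩
    refine ⟨γ, hαγ, ?_, ?_⟩
    · exact ⟨γ, hαγ, trivial, hchain⟩
    · clear hβmem
      induction hchain using Relation.ReflTransGen.head_induction_on with
      | refl => exact Relation.ReflTransGen.refl
      | head hstep htail ih =>
        exact Relation.ReflTransGen.head
          ⟨hstep.1, ⟨γ, hαγ, trivial, htail⟩⟩ ih

end UCG
end

section
/- Fix positive integers I and D, and let S ⊆ T(n,k) be the set of strings whose cyclic increments are all of size at most I and cyclic decrements all of size at most D. Then every β ∈ S is increasable in S to kⁿ (the all-k string). -/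
namespace UCG

/-- The strings all of whose cyclic increments have size at most `I` and cyclic
decrements size at most `D`. -/
def BndS (n k I D : ℕ) : Set (Str n k) :=
  {β | ∀ i : Fin n,
    (β ⟨(i.val + 1) % n, Nat.mod_lt _ i.pos⟩ : ℕ) ≤ (β i : ℕ) + I ∧
    (β i : ℕ) ≤ (β ⟨(i.val + 1) % n, Nat.mod_lt _ i.pos⟩ : ℕ) + D}

/-- every string with cyclic increments ≤ I and cyclic decrements ≤ D
is increasable in that set to the all-`k` string. -/
theorem bounded_jumps_incr {n k I D : ℕ} (hk : 0 < k) (hI : 0 < I) (hD : 0 < D) :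
    ∀ β ∈ BndS n k I D,
      IncrTo (BndS n k I D) β (fun _ => (⟨k - 1, Nat.sub_lt hk one_pos⟩ : Fin k)) := by
  set S := BndS n k I D with hS
  set tgt : Str n k := fun _ => (⟨k - 1, Nat.sub_lt hk one_pos⟩ : Fin k) with htgt
  have key : ∀ N : ℕ, ∀ β : Str n k, β ∈ S → (∑ j, (k - 1 - (β j : ℕ))) ≤ N →
      Relation.ReflTransGen (fun x y => OneUp x y ∧ y ∈ S) β tgt := by
    intro N
    induction N with
    | zero =>
      intro β hβ hm
      have hb : β = tgt := by
        funext j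
        have h1 : k - 1 - (β j : ℕ) = 0 :=
          Finset.sum_eq_zero_iff.mp (Nat.le_zero.mp hm) j (Finset.mem_univ j)
        have h2 := (β j).isLt
        exact Fin.ext (by simp [htgt]; omega)
      rw [hb]
    | succ N ih =>
      intro β hβ hm
      by_cases hb : β = tgt
      · rw [hb]
      · have hne : ∃ j : Fin n, (β j : ℕ) < k - 1 := by
          by_contra h
          push_neg at h
          apply hb
          funext j
          have h2 := (β j).isLt
          have h3 := h j
          exact Fin.ext (by simp [htgt]; omega)
        obtain ⟨j0, hj0⟩ := hne
        have hnΝ : (Finset.univ : Finset (Fin n)).Nonempty := ⟨j0, Finset.mem_univ _⟩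
        obtain ⟨i, -, hi⟩ := Finset.exists_min_image Finset.univ (fun j => (β j : ℕ)) hnΝ
        have him : (β i : ℕ) < k - 1 := lt_of_le_of_lt (hi j0 (Finset.mem_univ _)) hj0
        have hik : (β i : ℕ) + 1 < k := by omega
        set γ : Str n k := Function.update β i ⟨(β i : ℕ) + 1, hik⟩ with hγ
        have hγi : (γ i : ℕ) = (β i : ℕ) + 1 := by simp [hγ]
        have hγne : ∀ j : Fin n, j ≠ i → γ j = β j := fun j hj =>
          Function.update_of_ne hj _ _
        have hγS : γ ∈ S := by
          intro l
          have l' : Fin n := ⟨(l.val + 1) % n, Nat.mod_lt _ l.pos⟩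
          show (γ ⟨(l.val + 1) % n, Nat.mod_lt _ l.pos⟩ : ℕ) ≤ (γ l : ℕ) + I ∧
            (γ l : ℕ) ≤ (γ ⟨(l.val + 1) % n, Nat.mod_lt _ l.pos⟩ : ℕ) + D
          set m : Fin n := ⟨(l.val + 1) % n, Nat.mod_lt _ l.pos⟩ with hm'
          have h1 : (β m : ℕ) ≤ (β l : ℕ) + I ∧ (β l : ℕ) ≤ (β m : ℕ) + D := hβ l
          have h2 := hi l (Finset.mem_univ _)
          have h3 := hi m (Finset.mem_univ _)
          have gl : (γ l : ℕ) = if l = i then (β i : ℕ) + 1 else (β l : ℕ) := by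
            split_ifs with h
            · rw [h]; exact hγi
            · rw [hγne _ h]
          have gm : (γ m : ℕ) = if m = i then (β i : ℕ) + 1 else (β m : ℕ) := by
            split_ifs with h
            · rw [h]; exact hγi
            · rw [hγne _ h]
          constructor <;> rw [gl, gm] <;> split_ifs <;> subst_vars <;> omega
        have hOne : OneUp β γ := by
          refine ⟨i, ?_, fun j hj => (hγne j hj).symm⟩
          rw [Fin.lt_def, hγi]
          omega
        have hmeasγ : (∑ j, (k - 1 - (γ j : ℕ))) ≤ N := by
          have e1 : (k - 1 - (γ i : ℕ)) + ∑ j ∈ Finset.univ.erase i, (k - 1 - (γ j : ℕ))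
              = ∑ j, (k - 1 - (γ j : ℕ)) :=
            Finset.add_sum_erase Finset.univ (fun j => k - 1 - (γ j : ℕ)) (Finset.mem_univ i)
          have e2 : (k - 1 - (β i : ℕ)) + ∑ j ∈ Finset.univ.erase i, (k - 1 - (β j : ℕ))
              = ∑ j, (k - 1 - (β j : ℕ)) :=
            Finset.add_sum_erase Finset.univ (fun j => k - 1 - (β j : ℕ)) (Finset.mem_univ i)
          have e3 : ∑ j ∈ Finset.univ.erase i, (k - 1 - (γ j : ℕ))
              = ∑ j ∈ Finset.univ.erase i, (k - 1 - (β j : ℕ)) :=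
            Finset.sum_congr rfl fun x hx => by
              rw [hγne x (Finset.ne_of_mem_erase hx)]
          rw [hγi] at e1
          omega
        exact Relation.ReflTransGen.head ⟨hOne, hγS⟩ (ih γ hγS hmeasγ)
  intro β hβ
  exact ⟨hβ, key _ β hβ le_rfl⟩

end UCG
end

section
/- Fix integers 0 ≤ m < M < k, and let S ⊆ T(n,k) be the set of strings whose span (maximum symbol minus minimum symbol) lies between m and M inclusive. Then every β ∈ S is increasable in S to some rotation of α = (k−m)k^{n−1}. -/
/-!
Let `β` have its least symbol `a` at position `i₀` and its greatest symbol `b` at `i₁`. Every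
string between `β` and the two-level string with `b - m` at `i₀` and `b` elsewhere still has span
at least `m` (compare positions `i₁` and `i₀`) and at most `b - a ≤ M`, so `β` is increasable to
it. Two-level strings with gap exactly `m` then climb diagonally, one unit at a time, since
`m < M` leaves room to raise the upper level first. The top of the diagonal, `k - 1 - m` at `i₀`
and `k - 1` elsewhere, is the rotation of `α` by `i₀`.
-/

namespace UCG

/-- The span of a string: greatest symbol minus least symbol. -/
def spanOf {n k : ℕ} (hn : 0 < n) (β : Str n k) : ℕ :=
  (Finset.univ.sup' (Finset.univ_nonempty_iff.mpr ⟨⟨0, hn⟩⟩) fun i => (β i : ℕ)) -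
  (Finset.univ.inf' (Finset.univ_nonempty_iff.mpr ⟨⟨0, hn⟩⟩) fun i => (β i : ℕ))

section

variable {n k : ℕ}

def IncrStep (S : Set (Str n k)) (β γ : Str n k) : Prop :=
  OneUp β γ ∧ γ ∈ S

theorem reflTransGen_incrStep_of_Icc_subset {S : Set (Str n k)} {β f : Str n k} (hle : β ≤ f)
    (hS : Set.Icc β f ⊆ S) : Relation.ReflTransGen (IncrStep S) β f := by
  classical
  suffices h : ∀ s : Finset (Fin n), ∀ γ ∈ Set.Icc β f, (∀ i ∉ s, γ i = f i) →
      Relation.ReflTransGen (IncrStep S) γ f from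
    h Finset.univ β ⟨le_rfl, hle⟩ fun i hi => absurd (Finset.mem_univ i) hi
  intro s
  induction s using Finset.induction_on with
  | empty =>
    intro γ _ hγ
    rw [funext fun i => hγ i (Finset.notMem_empty i)]
  | insert i s _ ih =>
    intro γ hγ hout
    set γ' := Function.update γ i (f i)
    have hγ' : γ' ∈ Set.Icc β f :=
      ⟨le_update_iff.mpr ⟨(hγ.1 i).trans (hγ.2 i), fun j _ => hγ.1 j⟩,
        update_le_iff.mpr ⟨le_rfl, fun j _ => hγ.2 j⟩⟩
    have hγγ' : Relation.ReflTransGen (IncrStep S) γ γ' := by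
      rcases (hγ.2 i).lt_or_eq with hlt | heq
      · refine .single ⟨⟨i, by simpa [γ'] using hlt, fun j hj => ?_⟩, hS hγ'⟩
        exact (Function.update_of_ne hj _ _).symm
      · rw [show γ' = γ from Function.update_eq_self_iff.mpr heq.symm]
    refine hγγ'.trans (ih γ' hγ' fun j hj => ?_)
    by_cases hji : j = i
    · simp [γ', hji]
    · simpa [γ', hji] using hout j (by simp [hji, hj])

theorem exists_spanOf_eq (hn : 0 < n) (β : Str n k) :
    ∃ i j, (∀ l, (β l : ℕ) ≤ β i) ∧ (∀ l, (β j : ℕ) ≤ β l) ∧ spanOf hn β = β i - β j := by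
  have hne : (Finset.univ : Finset (Fin n)).Nonempty := Finset.univ_nonempty_iff.mpr ⟨⟨0, hn⟩⟩
  obtain ⟨i, -, hi⟩ := Finset.exists_mem_eq_sup' hne fun l => (β l : ℕ)
  obtain ⟨j, -, hj⟩ := Finset.exists_mem_eq_inf' hne fun l => (β l : ℕ)
  refine ⟨i, j, fun l => ?_, fun l => ?_, by rw [spanOf, hi, hj]⟩
  · exact hi ▸ Finset.le_sup' (fun l => (β l : ℕ)) (Finset.mem_univ l)
  · exact hj ▸ Finset.inf'_le (fun l => (β l : ℕ)) (Finset.mem_univ l)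

theorem le_spanOf_iff (hn : 0 < n) (β : Str n k) {m : ℕ} :
    m ≤ spanOf hn β ↔ ∃ i j, m ≤ (β i : ℕ) - β j := by
  obtain ⟨i₁, i₀, hmax, hmin, hspan⟩ := exists_spanOf_eq hn β
  refine ⟨fun h => ⟨i₁, i₀, hspan ▸ h⟩, fun ⟨i, j, h⟩ => hspan ▸ h.trans ?_⟩
  exact tsub_le_tsub (hmax i) (hmin j)

theorem spanOf_le_iff (hn : 0 < n) (β : Str n k) {M : ℕ} :
    spanOf hn β ≤ M ↔ ∀ i j, (β i : ℕ) - β j ≤ M := by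
  obtain ⟨i₁, i₀, hmax, hmin, hspan⟩ := exists_spanOf_eq hn β
  refine ⟨fun h i j => (tsub_le_tsub (hmax i) (hmin j)).trans (hspan ▸ h), fun h => hspan ▸ h i₁ i₀⟩

def spanSet (hn : 0 < n) (m M : ℕ) : Set (Str n k) :=
  {β | m ≤ spanOf hn β ∧ spanOf hn β ≤ M}

theorem reflTransGen_spanSet_of_le (hn : 0 < n) {m M : ℕ} {β f : Str n k} (hle : β ≤ f)
    (hlo : ∃ i j, m ≤ (β i : ℕ) - f j) (hhi : ∀ i j, (f i : ℕ) - β j ≤ M) :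
    Relation.ReflTransGen (IncrStep (spanSet hn m M)) β f := by
  refine reflTransGen_incrStep_of_Icc_subset hle fun γ ⟨hβγ, hγf⟩ => ⟨?_, ?_⟩
  · obtain ⟨i, j, h⟩ := hlo
    exact (le_spanOf_iff hn γ).mpr ⟨i, j, h.trans (tsub_le_tsub (α := ℕ) (hβγ i) (hγf j))⟩
  · exact (spanOf_le_iff hn γ).mpr fun i j =>
      (tsub_le_tsub (α := ℕ) (hγf i) (hβγ j)).trans (hhi i j)

def twoLevel (i₀ : Fin n) (x t : Fin k) : Str n k :=
  fun i => if i = i₀ then x else t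

theorem reflTransGen_twoLevel_of_le (hn : 0 < n) {m M : ℕ} (hm : m = 0 ∨ Nontrivial (Fin n))
    (i₀ : Fin n) {x t x' t' : Fin k} (hx : x ≤ x') (ht : t ≤ t') (hlo : (x' : ℕ) + m ≤ t)
    (hhi : (t' : ℕ) ≤ x + M) :
    Relation.ReflTransGen (IncrStep (spanSet hn m M)) (twoLevel i₀ x t) (twoLevel i₀ x' t') := by
  refine reflTransGen_spanSet_of_le hn (fun i => ?_) ?_ fun i j => ?_
  · unfold twoLevel; split_ifs <;> assumption
  · rcases hm with rfl | _
    · exact ⟨i₀, i₀, Nat.zero_le _⟩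
    · obtain ⟨j, hj⟩ := exists_ne i₀
      exact ⟨j, i₀, by simp only [twoLevel, if_neg hj, if_true]; omega⟩
  · have hxv : (x : ℕ) ≤ x' := hx
    have htv : (t : ℕ) ≤ t' := ht
    unfold twoLevel; split_ifs <;> omega

theorem reflTransGen_twoLevel_of_extremes (hn : 0 < n) {m M : ℕ} {β : Str n k} {i₀ i₁ : Fin n}
    (hmax : ∀ l, (β l : ℕ) ≤ β i₁) (hmin : ∀ l, (β i₀ : ℕ) ≤ β l) (hlo : m ≤ (β i₁ : ℕ) - β i₀)
    (hhi : (β i₁ : ℕ) - β i₀ ≤ M) :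
    Relation.ReflTransGen (IncrStep (spanSet hn m M)) β
      (twoLevel i₀ ⟨β i₁ - m, by have := (β i₁).isLt; omega⟩ (β i₁)) := by
  refine reflTransGen_spanSet_of_le hn (fun i => ?_) ⟨i₁, i₀, ?_⟩ fun i j => ?_
  · have := hmax i
    unfold twoLevel; split_ifs with h
    · subst h; show (β i : ℕ) ≤ β i₁ - m; omega
    · exact this
  · simp only [twoLevel, if_true]; omega
  · have := hmin j
    unfold twoLevel; split_ifs
    · simp only; omega
    · omega

theorem reflTransGen_twoLevel_of_gap_eq (hn : 0 < n) {m M : ℕ} (hmM : m < M)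
    (hm : m = 0 ∨ Nontrivial (Fin n)) (i₀ : Fin n) {x t x' t' : Fin k}
    (ht : (t : ℕ) = x + m) (ht' : (t' : ℕ) = x' + m) (hxx' : x ≤ x') :
    Relation.ReflTransGen (IncrStep (spanSet hn m M)) (twoLevel i₀ x t) (twoLevel i₀ x' t') := by
  obtain ⟨d, hd⟩ := Nat.exists_eq_add_of_le (Fin.le_iff_val_le_val.mp hxx')
  have ht'k := t'.isLt
  induction d generalizing x t with
  | zero =>
    obtain rfl : x = x' := Fin.ext (by omega)
    obtain rfl : t = t' := Fin.ext (by omega)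
    rfl
  | succ d ih =>
    have hx₁ : (x : ℕ) + 1 < k := by omega
    have ht₁ : (t : ℕ) + 1 < k := by omega
    have hraise_t := reflTransGen_twoLevel_of_le (M := M) hn hm i₀ (x := x) (x' := x) (t := t)
      (t' := ⟨t + 1, ht₁⟩) le_rfl (Nat.le_succ _) (by omega) (by simp only; omega)
    have hraise_x := reflTransGen_twoLevel_of_le (M := M) hn hm i₀ (x := x) (x' := ⟨x + 1, hx₁⟩)
      (t := ⟨t + 1, ht₁⟩) (t' := ⟨t + 1, ht₁⟩) (Nat.le_succ _) le_rfl (by simp only; omega)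
      (by simp only; omega)
    exact hraise_t.trans (hraise_x.trans (ih (by simp only; omega)
      (Fin.le_iff_val_le_val.mpr (by simp only; omega)) (by simp only; omega)))

theorem isRotation_comp_sub [NeZero n] (β : Str n k) (i₀ : Fin n) :
    IsRotation β fun i => β (i - i₀) :=
  ⟨n - i₀, fun i => congrArg β (Fin.ext (by rw [Fin.val_sub, add_comm]))⟩

end

/-- with `0 ≤ m < M < k`, every string of span between `m` and `M` is
increasable in that set to a rotation of `α = (k-m)k^(n-1)`. -/
theorem span_incr {n k m M : ℕ} (hn : 0 < n) (hm : m < M) (hM : M < k) :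
    ∀ β ∈ {β : Str n k | m ≤ spanOf hn β ∧ spanOf hn β ≤ M},
      ∃ γ, IsRotation
          (fun i : Fin n =>
            if i.val = 0 then (⟨k - m - 1, by omega⟩ : Fin k) else (⟨k - 1, by omega⟩ : Fin k)) γ ∧
        IncrTo {β : Str n k | m ≤ spanOf hn β ∧ spanOf hn β ≤ M} β γ := by
  intro β hβ
  have : NeZero n := ⟨hn.ne'⟩
  obtain ⟨i₁, i₀, hmax, hmin, hspan⟩ := exists_spanOf_eq hn β
  have hlo : m ≤ (β i₁ : ℕ) - β i₀ := hspan ▸ hβ.1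
  have hhi : (β i₁ : ℕ) - β i₀ ≤ M := hspan ▸ hβ.2
  have hm₀ : m = 0 ∨ Nontrivial (Fin n) := by
    by_cases h : i₁ = i₀
    · left; subst h; omega
    · exact .inr (nontrivial_of_ne i₁ i₀ h)
  have hraise := reflTransGen_twoLevel_of_extremes hn hmax hmin hlo hhi
  refine ⟨twoLevel i₀ ⟨k - m - 1, by omega⟩ ⟨k - 1, by omega⟩, ?_, hβ, ?_⟩
  · convert isRotation_comp_sub _ i₀ using 2 with i
    simp [twoLevel, Fin.val_eq_zero_iff, sub_eq_zero]
  · have hb := (β i₁).isLt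
    exact hraise.trans (reflTransGen_twoLevel_of_gap_eq hn hm hm₀ i₀ (by simp; omega)
      (by simp; omega) (Fin.le_iff_val_le_val.mpr (by simp; omega)))

end UCG
end

section
/- Let γ ∈ T(m,k) be a string containing some symbol a but not containing some symbol b with a < b. Let S ⊆ T(n,k) (n ≥ m) be the set of strings not containing γ as a cyclic substring. Then kⁿ ∈ S and every β ∈ S is increasable in S to kⁿ. -/
namespace UCG

/-- if `γ` contains a symbol `a` but not some symbol `b > a`, then the
all-`k` string avoids `γ` cyclically, and every string avoiding `γ` cyclically is
increasable, within the set of such strings, to the all-`k` string. -/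
theorem avoid_substring_incr {m n k : ℕ} (hn : 0 < n) (hmn : m ≤ n)
    (γ : Str m k) (a b : Fin k) (hab : a < b)
    (ha : ∃ i, γ i = a) (hb : ∀ i, γ i ≠ b) :
    (fun _ : Fin n => (⟨k - 1, Nat.sub_lt a.pos one_pos⟩ : Fin k)) ∈
      {β : Str n k | ¬ CycSubstr hn γ β} ∧
    ∀ β ∈ {β : Str n k | ¬ CycSubstr hn γ β},
      IncrTo {β : Str n k | ¬ CycSubstr hn γ β} β
        (fun _ => (⟨k - 1, Nat.sub_lt a.pos one_pos⟩ : Fin k)) := by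
  set S : Set (Str n k) := {β : Str n k | ¬ CycSubstr hn γ β} with hS
  set top : Str n k := fun _ => (⟨k - 1, Nat.sub_lt a.pos one_pos⟩ : Fin k) with htop
  -- Lemma A: any string with all symbols ≥ b avoids γ
  have lemA : ∀ β : Str n k, (∀ i, b ≤ β i) → β ∈ S := by
    intro β hβ ⟨j, hj⟩
    obtain ⟨i₀, hi₀⟩ := ha
    have h1 := hj i₀
    have h2 := hβ ⟨(j + i₀.val) % n, Nat.mod_lt _ hn⟩
    rw [h1, hi₀] at h2
    exact absurd hab (not_lt.mpr h2)
  have hbk : b.val ≤ k - 1 := by have := b.isLt; omega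
  have htopmem : top ∈ S := lemA top (fun i => hbk)
  -- Lemma B: updating a position to b preserves avoidance
  have lemB : ∀ β : Str n k, β ∈ S → ∀ i : Fin n,
      Function.update β i b ∈ S := by
    intro β hβ i ⟨j, hj⟩
    by_cases hc : ∃ t : Fin m, (⟨(j + t.val) % n, Nat.mod_lt _ hn⟩ : Fin n) = i
    · obtain ⟨t, ht⟩ := hc
      have := hj t
      rw [ht, Function.update_self] at this
      exact hb t this.symm
    · push_neg at hc
      refine hβ ⟨j, fun t => ?_⟩
      rw [← hj t, Function.update_of_ne (hc t)]
  -- Phase 2: all symbols ≥ b, increase everything to k-1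
  have phase2 : ∀ N : ℕ, ∀ β : Str n k,
      (Finset.filter (fun i => (β i).val < k - 1) Finset.univ).card ≤ N →
      (∀ i, b ≤ β i) →
      Relation.ReflTransGen (fun x y => OneUp x y ∧ y ∈ S) β top := by
    intro N
    induction N with
    | zero =>
      intro β hcard _
      have : β = top := by
        funext i
        have : ¬ (β i).val < k - 1 := by
          intro h
          have : i ∈ Finset.filter (fun i => (β i).val < k - 1) Finset.univ := by
            simp [h]
          have := Finset.card_pos.mpr ⟨i, this⟩
          omega
        have hlt := (β i).isLt
        apply Fin.ext
        show (β i).val = k - 1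
        omega
      rw [this]
    | succ N ih =>
      intro β hcard hge
      by_cases h0 : ∃ i : Fin n, (β i).val < k - 1
      · obtain ⟨i, hi⟩ := h0
        set β' := Function.update β i (⟨k - 1, Nat.sub_lt a.pos one_pos⟩ : Fin k) with hβ'
        have hge' : ∀ p, b ≤ β' p := by
          intro p
          by_cases hp : p = i
          · subst hp; simp [hβ', Fin.le_def, hbk]
          · rw [hβ', Function.update_of_ne hp]; exact hge p
        have hmem' : β' ∈ S := lemA β' hge'
        have hone : OneUp β β' := by
          refine ⟨i, ?_, fun p hp => (Function.update_of_ne hp _ _).symm⟩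
          simp [hβ', Fin.lt_def, hi]
        have hcard' : (Finset.filter (fun p => (β' p).val < k - 1) Finset.univ).card ≤ N := by
          have hsub : Finset.filter (fun p => (β' p).val < k - 1) Finset.univ ⊆
              (Finset.filter (fun p => (β p).val < k - 1) Finset.univ).erase i := by
            intro p hp
            simp only [Finset.mem_filter, Finset.mem_univ, true_and] at hp
            by_cases hpi : p = i
            · subst hpi; simp [hβ'] at hp
            · rw [hβ', Function.update_of_ne hpi] at hp
              exact Finset.mem_erase.mpr ⟨hpi, by simp only [Finset.mem_filter, Finset.mem_univ, true_and]; exact hp⟩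
          have hmemi : i ∈ Finset.filter (fun p => (β p).val < k - 1) Finset.univ := by
            simp [hi]
          have := Finset.card_le_card hsub
          have := Finset.card_erase_of_mem hmemi
          omega
        exact Relation.ReflTransGen.head ⟨hone, hmem'⟩ (ih β' hcard' hge')
      · push_neg at h0
        have : β = top := by
          funext p
          have := (β p).isLt
          have := h0 p
          apply Fin.ext
          show (β p).val = k - 1
          omega
        rw [this]
  -- Phase 1: raise all symbols below b to b
  have phase1 : ∀ N : ℕ, ∀ β : Str n k, β ∈ S →
      (Finset.filter (fun i => (β i).val < b.val) Finset.univ).card ≤ N →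
      Relation.ReflTransGen (fun x y => OneUp x y ∧ y ∈ S) β top := by
    intro N
    induction N with
    | zero =>
      intro β _ hcard
      have hge : ∀ i, b ≤ β i := by
        intro i
        rw [Fin.le_def]
        by_contra h
        have : i ∈ Finset.filter (fun i => (β i).val < b.val) Finset.univ := by
          simp; omega
        have := Finset.card_pos.mpr ⟨i, this⟩
        omega
      exact phase2 _ β le_rfl hge
    | succ N ih =>
      intro β hβ hcard
      by_cases h0 : ∃ i : Fin n, (β i).val < b.val
      · obtain ⟨i, hi⟩ := h0
        set β' := Function.update β i b with hβ'
        have hmem' : β' ∈ S := lemB β hβ i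
        have hone : OneUp β β' := by
          refine ⟨i, ?_, fun p hp => (Function.update_of_ne hp _ _).symm⟩
          simp [hβ', Fin.lt_def, hi]
        have hcard' : (Finset.filter (fun p => (β' p).val < b.val) Finset.univ).card ≤ N := by
          have hsub : Finset.filter (fun p => (β' p).val < b.val) Finset.univ ⊆
              (Finset.filter (fun p => (β p).val < b.val) Finset.univ).erase i := by
            intro p hp
            simp only [Finset.mem_filter, Finset.mem_univ, true_and] at hp
            by_cases hpi : p = i
            · subst hpi; simp [hβ'] at hp
            · rw [hβ', Function.update_of_ne hpi] at hp
              exact Finset.mem_erase.mpr ⟨hpi, by simp only [Finset.mem_filter, Finset.mem_univ, true_and]; exact hp⟩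
          have hmemi : i ∈ Finset.filter (fun p => (β p).val < b.val) Finset.univ := by
            simp only [Finset.mem_filter, Finset.mem_univ, true_and]; exact hi
          have := Finset.card_le_card hsub
          have := Finset.card_erase_of_mem hmemi
          omega
        exact Relation.ReflTransGen.head ⟨hone, hmem'⟩ (ih β' hmem' hcard')
      · push_neg at h0
        have hge : ∀ p, b ≤ β p := fun p => by
          rw [Fin.le_def]; exact h0 p
        exact phase2 _ β le_rfl hge
  exact ⟨htopmem, fun β hβ => ⟨hβ, phase1 _ β hβ le_rfl⟩⟩

end UCG
end

section
/- Let n be a multiple of 3 and let S ⊆ T(n,9) be the set of strings not containing 8998 as a cyclic substring. Then the string (889)^{n/3} lies in S but is not increasable in S to 9ⁿ; in fact any single-symbol increase of (889)^{n/3} produces a string containing 8998 as a cyclic substring or a string still not increasable to 9ⁿ. -/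
namespace UCG

/-- for `n ≥ 4` a multiple of 3, the string `(889)^(n/3)` avoids `8998`
cyclically but is not increasable, within the set of strings over `{1,…,9}` avoiding
`8998` cyclically, to the all-9 string.  (Symbols `1,…,9` are encoded as `Fin 9`,
so `8 ↦ 7`, `9 ↦ 8`; `8998` is `![7,8,8,7]`.) -/
theorem avoid_8998_counterexample {n : ℕ} (h3 : 3 ∣ n) (hn4 : 4 ≤ n) :
    ((fun i : Fin n => if i.val % 3 = 2 then (8 : Fin 9) else (7 : Fin 9)) ∈
      {β : Str n 9 | ¬ CycSubstr (by omega) (![7, 8, 8, 7] : Str 4 9) β}) ∧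
    ¬ IncrTo {β : Str n 9 | ¬ CycSubstr (by omega) (![7, 8, 8, 7] : Str 4 9) β}
        (fun i : Fin n => if i.val % 3 = 2 then (8 : Fin 9) else (7 : Fin 9))
        (fun _ => (8 : Fin 9)) := by
  obtain ⟨m', hm'⟩ := id h3
  have hn3 : n % 3 = 0 := by omega
  have hn : 0 < n := by omega
  have hn6 : 6 ≤ n := by omega
  constructor
  · rintro ⟨j, hj⟩
    have h1 := hj ⟨1, by norm_num⟩
    have h2 := hj ⟨2, by norm_num⟩
    simp only [Matrix.cons_val_one, Matrix.head_cons] at h1 h2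
    have c1 : (j + 1) % 3 = 2 := by
      by_contra hc
      rw [Nat.mod_mod_of_dvd _ h3, if_neg hc] at h1
      exact absurd h1 (by decide)
    have c2 : (j + 2) % 3 = 2 := by
      by_contra hc
      rw [Nat.mod_mod_of_dvd _ h3, if_neg hc] at h2
      exact absurd h2 (by decide)
    omega
  · rintro ⟨hS, hrel⟩
    rcases Relation.ReflTransGen.cases_head hrel with heq | ⟨γ, ⟨hone, hγS⟩, _⟩
    · have h0 := congrFun heq ⟨0, hn⟩
      rw [show ((⟨0, hn⟩ : Fin n)).val % 3 = 0 from rfl] at h0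
      rw [if_neg (by norm_num)] at h0
      exact absurd h0 (by decide)
    · apply hγS
      obtain ⟨i, hlt, heqj⟩ := hone
      have hvlt := (γ i).isLt
      have hi2 : i.val % 3 ≠ 2 := by
        intro h
        have hv : ((if i.val % 3 = 2 then (8 : Fin 9) else 7) : Fin 9).val < (γ i).val := hlt
        rw [if_pos h] at hv
        have h8 : ((8 : Fin 9)).val = 8 := rfl
        omega
      have hlt7 : ((7 : Fin 9)).val < (γ i).val := by
        have hv : ((if i.val % 3 = 2 then (8 : Fin 9) else 7) : Fin 9).val < (γ i).val := hlt
        rwa [if_neg hi2] at hv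
      have hgi : γ i = 8 := by
        apply Fin.ext
        have h7 : ((7 : Fin 9)).val = 7 := rfl
        have h8 : ((8 : Fin 9)).val = 8 := rfl
        omega
      have key : ∀ p : ℕ, p % 3 ≠ i.val % 3 → ∀ h : p % n < n,
          γ ⟨p % n, h⟩ = if p % 3 = 2 then (8 : Fin 9) else 7 := by
        intro p hp h
        have hne : (⟨p % n, h⟩ : Fin n) ≠ i := by
          intro he
          apply hp
          have hv : p % n = i.val := congrArg Fin.val he
          calc p % 3 = p % n % 3 := (Nat.mod_mod_of_dvd p h3).symm
            _ = i.val % 3 := by rw [hv]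
        rw [← heqj _ hne]
        show (if (p % n) % 3 = 2 then (8 : Fin 9) else 7) = _
        rw [Nat.mod_mod_of_dvd p h3]
      have hi3 : i.val % 3 = 0 ∨ i.val % 3 = 1 := by omega
      have hin := i.isLt
      rcases hi3 with hi0 | hi1
      · refine ⟨i.val + n - 2, fun w => ?_⟩
        have hkey2 : ∀ P : (i.val + n - 2 + 2) % n < n,
            γ ⟨(i.val + n - 2 + 2) % n, P⟩ = 8 := by
          intro P
          have he : i.val + n - 2 + 2 = i.val + n := by omega
          simp only [he, Nat.add_mod_right, Nat.mod_eq_of_lt hin]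
          exact hgi
        fin_cases w
        · show γ ⟨(i.val + n - 2 + 0) % n, _⟩ = (7 : Fin 9)
          rw [key _ (by omega), if_neg (by omega)]
        · show γ ⟨(i.val + n - 2 + 1) % n, _⟩ = (8 : Fin 9)
          rw [key _ (by omega), if_pos (by omega)]
        · exact hkey2 _
        · show γ ⟨(i.val + n - 2 + 3) % n, _⟩ = (7 : Fin 9)
          rw [key _ (by omega), if_neg (by omega)]
      · refine ⟨i.val + n - 1, fun w => ?_⟩
        have hkey2 : ∀ P : (i.val + n - 1 + 1) % n < n,
            γ ⟨(i.val + n - 1 + 1) % n, P⟩ = 8 := by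
          intro P
          have he : i.val + n - 1 + 1 = i.val + n := by omega
          simp only [he, Nat.add_mod_right, Nat.mod_eq_of_lt hin]
          exact hgi
        fin_cases w
        · show γ ⟨(i.val + n - 1 + 0) % n, _⟩ = (7 : Fin 9)
          rw [key _ (by omega), if_neg (by omega)]
        · exact hkey2 _
        · show γ ⟨(i.val + n - 1 + 2) % n, _⟩ = (8 : Fin 9)
          rw [key _ (by omega), if_pos (by omega)]
        · show γ ⟨(i.val + n - 1 + 3) % n, _⟩ = (7 : Fin 9)
          rw [key _ (by omega), if_neg (by omega)]



end UCG
end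

section
/- In the Warden's Game on legal position set S ⊆ T(n,k) (S closed under rotations) with goal α ∈ S, suppose β₁ = γa ∈ S and β₂ = a'γ ∈ S with a' ≥ a. Then starting from β₁ the prisoner has a strategy forcing the game to eventually reach position β₂. -/
namespace UCG

def sumStr {n k : ℕ} (q : Str n k) : ℕ := ∑ i, (q i).val

lemma sum_shift {n k : ℕ} (hn : 0 < n) (c : Fin k) (x : Str n k) :
    sumStr (shift c x) + (lastSym hn x).val = sumStr x + c.val := by
  obtain ⟨n', rfl⟩ : ∃ n', n = n' + 1 := ⟨n - 1, by omega⟩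
  have hsummand : ∀ i : Fin n', shift c x i.succ = x i.castSucc := by
    intro i
    show (if (i.succ : Fin (n'+1)).val = 0 then c else _) = _
    rw [if_neg (by simp)]
    exact congrArg x (Fin.ext (by simp))
  have hlast : lastSym hn x = x (Fin.last n') := by
    rfl
  have h0 : shift c x 0 = c := by
    show (if (0 : Fin (n'+1)).val = 0 then c else _) = c
    simp
  unfold sumStr
  rw [Fin.sum_univ_succ, Fin.sum_univ_castSucc, hlast, h0]
  have : ∀ i : Fin n', (shift c x i.succ).val = (x i.castSucc).val := fun i => by rw [hsummand]
  rw [Finset.sum_congr rfl (fun i _ => this i)]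
  omega

def rr {n k : ℕ} (hn : 0 < n) (x : Str n k) : Str n k := shift (lastSym hn x) x

lemma rr_apply {n k : ℕ} (hn : 0 < n) (x : Str n k) (i : Fin n) :
    rr hn x i = x ⟨(i.val + (n-1)) % n, Nat.mod_lt _ hn⟩ := by
  unfold rr shift lastSym
  by_cases h : i.val = 0
  · rw [if_pos h]; congr 1; apply Fin.ext
    simp [h, Nat.mod_eq_of_lt (by omega : n - 1 < n)]
  · rw [if_neg h]; congr 1; apply Fin.ext
    show i.val - 1 = (i.val + (n-1)) % n
    have hi := i.isLt
    have h2 : i.val + (n-1) = (i.val - 1) + 1 * n := by omega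
    rw [h2, Nat.add_mul_mod_self_right, Nat.mod_eq_of_lt (by omega)]

lemma rr_mem {n k : ℕ} (hn : 0 < n) {S : Set (Str n k)} (hS : ClosedUnderRot S)
    {x : Str n k} (hx : x ∈ S) : rr hn x ∈ S :=
  hS x hx _ ⟨n-1, fun i => by rw [rr_apply hn x i]⟩

lemma rr_iter_mem {n k : ℕ} (hn : 0 < n) {S : Set (Str n k)} (hS : ClosedUnderRot S)
    {x : Str n k} (hx : x ∈ S) : ∀ t, (rr hn)^[t] x ∈ S := by
  intro t; induction t with
  | zero => simpa using hx
  | succ t ih => rw [Function.iterate_succ_apply']; exact rr_mem hn hS ih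

lemma sum_rr {n k : ℕ} (hn : 0 < n) (x : Str n k) : sumStr (rr hn x) = sumStr x := by
  have := sum_shift hn (lastSym hn x) x; unfold rr; omega

lemma sum_rr_iter {n k : ℕ} (hn : 0 < n) (x : Str n k) :
    ∀ t, sumStr ((rr hn)^[t] x) = sumStr x := by
  intro t; induction t with
  | zero => simp
  | succ t ih => rw [Function.iterate_succ_apply', sum_rr]; exact ih

lemma rr_iter_apply {n k : ℕ} (hn : 0 < n) (x : Str n k) :
    ∀ (t : ℕ) (i : Fin n),
      (rr hn)^[t] x i = x ⟨(i.val + t*(n-1)) % n, Nat.mod_lt _ hn⟩ := by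
  intro t; induction t with
  | zero => intro i; simp [Nat.mod_eq_of_lt i.isLt]
  | succ t ih =>
      intro i
      rw [Function.iterate_succ_apply', rr_apply, ih]
      congr 1; apply Fin.ext
      show (((i.val + (n-1)) % n) + t*(n-1)) % n = (i.val + (t+1)*(n-1)) % n
      rw [Nat.mod_add_mod]; ring_nf

lemma last_iter {n k : ℕ} (hn : 0 < n) (c : Fin k) (p : Str n k) :
    lastSym hn ((rr hn)^[n-1] (shift c p)) = c := by
  unfold lastSym
  rw [rr_iter_apply]
  have harith : ((n-1) + (n-1)*(n-1)) % n = 0 := by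
    obtain ⟨n', rfl⟩ : ∃ n', n = n'+1 := ⟨n-1, by omega⟩
    have h2 : (n'+1-1) + (n'+1-1)*(n'+1-1) = n' * (n'+1) := by simp; ring
    rw [h2, Nat.mul_mod_left]
  have : (⟨((n-1) + (n-1)*(n-1)) % n, Nat.mod_lt _ hn⟩ : Fin n) = ⟨0, hn⟩ :=
    Fin.ext harith
  rw [this]
  simp [shift]

lemma final_iter {n k : ℕ} (hn : 0 < n) (c s : Fin k) (p : Str n k) :
    shift s ((rr hn)^[n-1] (shift c p)) = shift s p := by
  funext i
  show (if i.val = 0 then s else ((rr hn)^[n-1] (shift c p)) ⟨i.val - 1, _⟩)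
      = (if i.val = 0 then s else p ⟨i.val - 1, _⟩)
  by_cases h : i.val = 0
  · rw [if_pos h, if_pos h]
  · rw [if_neg h, if_neg h]
    rw [rr_iter_apply]
    have hi := i.isLt
    have harith : (i.val - 1 + (n-1)*(n-1)) % n = i.val := by
      obtain ⟨n'', rfl⟩ : ∃ n'', n = n'' + 2 := ⟨n-2, by omega⟩
      have h2 : i.val - 1 + (n''+2-1)*(n''+2-1) = i.val + n''*(n''+2) := by
        have h3 : (n''+2-1)*(n''+2-1) = n''*(n''+2)+1 := by simp; ring
        omega
      rw [h2, Nat.add_mul_mod_self_right, Nat.mod_eq_of_lt hi]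
    have : (⟨(i.val - 1 + (n-1)*(n-1)) % n, Nat.mod_lt _ hn⟩ : Fin n)
        = ⟨i.val, hi⟩ := Fin.ext harith
    rw [this]
    simp [shift, h]


lemma winIn_mono {n k : ℕ} {hn : 0 < n} {S : Set (Str n k)} {t β : Str n k} {m m' : ℕ}
    (h : WinIn hn S t β m) (hm : m ≤ m') : WinIn hn S t β m' := by
  induction h generalizing m' with
  | passWin β mm c hc hcS heq hW ih =>
      obtain ⟨m'', rfl⟩ : ∃ m'', m' = m'' + 1 := ⟨m' - 1, by omega⟩
      exact .passWin β m'' c hc hcS heq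
        (fun c' h1 h2 h3 => ih c' h1 h2 h3 (by omega))
  | passStep β mm c hc hcS hwin hW ih1 ih2 =>
      obtain ⟨m'', rfl⟩ : ∃ m'', m' = m'' + 1 := ⟨m' - 1, by omega⟩
      exact .passStep β m'' c hc hcS (ih1 (by omega))
        (fun c' h1 h2 h3 => ih2 c' h1 h2 h3 (by omega))

lemma winIn_comp {n k : ℕ} {hn : 0 < n} {S : Set (Str n k)} {t₁ t₂ β : Str n k}
    {m₁ m₂ : ℕ} (h1 : WinIn hn S t₁ β m₁) (h2 : WinIn hn S t₂ t₁ m₂) :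
    WinIn hn S t₂ β (m₁ + m₂) := by
  induction h1 with
  | passWin β m c hc hcS heq hW ih =>
      have harr : m + 1 + m₂ = (m + m₂) + 1 := by omega
      rw [harr]
      refine .passStep β (m + m₂) c hc hcS ?_ ?_
      · rw [heq]; exact winIn_mono h2 (by omega)
      · intro c' hlt hmem hne
        by_cases hc' : shift c' β = t₁
        · rw [hc']; exact winIn_mono h2 (by omega)
        · exact ih c' hlt hmem hc'
  | passStep β m c hc hcS hwin hW ih1 ih2 =>
      have harr : m + 1 + m₂ = (m + m₂) + 1 := by omega
      rw [harr]
      refine .passStep β (m + m₂) c hc hcS ih1 ?_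
      intro c' hlt hmem hne
      by_cases hc' : shift c' β = t₁
      · rw [hc']; exact winIn_mono h2 (by omega)
      · exact ih2 c' hlt hmem hc'

lemma uniform_bound {n k : ℕ} {hn : 0 < n} {S : Set (Str n k)} {t : Str n k}
    (f : Fin k → Str n k) (P : Fin k → Prop)
    (h : ∀ c', P c' → ∃ m, WinIn hn S t (f c') m) :
    ∃ M, ∀ c', P c' → WinIn hn S t (f c') M := by
  classical
  refine ⟨Finset.univ.sup (fun c' => if hc : P c' then (h c' hc).choose else 0), ?_⟩
  intro c' hc
  have := (h c' hc).choose_spec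
  refine winIn_mono this ?_
  have := Finset.le_sup (f := fun c' => if hc : P c' then (h c' hc).choose else 0)
    (Finset.mem_univ c')
  simpa [dif_pos hc] using this

lemma forceShift {n k : ℕ} (hn : 0 < n) {S : Set (Str n k)} (hS : ClosedUnderRot S) :
    ∀ N : ℕ, ∀ p : Str n k, ∀ c s : Fin k, c ≤ s → shift c p ∈ S → shift s p ∈ S →
      sumStr (shift c p) ≤ N → ∃ m, WinIn hn S (shift s p) (shift c p) m := by
  intro N
  induction N using Nat.strong_induction_on with
  | _ N IH =>
  intro p c s hcs h1 h2 hsum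
  have key : ∀ d t, t + d = n - 1 →
      ∃ m, WinIn hn S (shift s p) ((rr hn)^[t] (shift c p)) m := by
    intro d
    induction d with
    | zero =>
        intro t ht
        have ht' : t = n - 1 := by omega
        subst ht'
        set y := (rr hn)^[n-1] (shift c p) with hy
        have hyS : y ∈ S := rr_iter_mem hn hS h1 _
        have hlast : lastSym hn y = c := last_iter hn c p
        have hfin : shift s y = shift s p := final_iter hn c s p
        have hsy : sumStr y = sumStr (shift c p) := sum_rr_iter hn _ _
        have hWex : ∀ c' : Fin k,
            (c' < lastSym hn y ∧ shift c' y ∈ S ∧ shift c' y ≠ shift s p) →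
            ∃ m, WinIn hn S (shift s p) (shift c' y) m := by
          rintro c' ⟨h1', h2', -⟩
          have hlt : sumStr (shift c' y) < N := by
            have hss := sum_shift hn c' y
            have hcv : c'.val < (lastSym hn y).val := h1'
            omega
          have hcle : c' ≤ s := le_of_lt (lt_of_lt_of_le (hlast ▸ h1') hcs)
          obtain ⟨m, hm⟩ := IH _ hlt y c' s hcle h2' (by rw [hfin]; exact h2) (le_refl _)
          exact ⟨m, by rwa [hfin] at hm⟩
        obtain ⟨M, hM⟩ := uniform_bound _ _ hWex
        exact ⟨M + 1, .passWin y M s (by rw [hlast]; exact hcs)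
          (by rw [hfin]; exact h2) hfin (fun c' a b c'' => hM c' ⟨a, b, c''⟩)⟩
    | succ d ihd =>
        intro t ht
        obtain ⟨m2, hm2⟩ := ihd (t+1) (by omega)
        set y := (rr hn)^[t] (shift c p) with hy
        have hnext : (rr hn)^[t+1] (shift c p) = shift (lastSym hn y) y := by
          rw [Function.iterate_succ_apply']; rfl
        rw [hnext] at hm2
        have hyS : y ∈ S := rr_iter_mem hn hS h1 _
        have hrrS : shift (lastSym hn y) y ∈ S := rr_mem hn hS hyS
        have hsy : sumStr y = sumStr (shift c p) := sum_rr_iter hn _ _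
        have hWex : ∀ c' : Fin k,
            (c' < lastSym hn y ∧ shift c' y ∈ S ∧ shift c' y ≠ shift s p) →
            ∃ m, WinIn hn S (shift s p) (shift c' y) m := by
          rintro c' ⟨h1', h2', -⟩
          have hlt : sumStr (shift c' y) < N := by
            have hss := sum_shift hn c' y
            have hcv : c'.val < (lastSym hn y).val := h1'
            omega
          obtain ⟨m1, hm1⟩ := IH _ hlt y c' (lastSym hn y) (le_of_lt h1') h2' hrrS (le_refl _)
          exact ⟨m1 + m2, winIn_comp hm1 hm2⟩
        obtain ⟨M, hM⟩ := uniform_bound _ _ hWex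
        refine ⟨(max M m2) + 1, .passStep y (max M m2) (lastSym hn y) (le_refl _) hrrS
          (winIn_mono hm2 (le_max_right _ _))
          (fun c' a b c'' => winIn_mono (hM c' ⟨a, b, c''⟩) (le_max_left _ _))⟩
  obtain ⟨m, hm⟩ := key (n-1) 0 (by omega)
  exact ⟨m, by simpa using hm⟩


/-- if `β₁ = γa ∈ S` and `β₂ = a'γ ∈ S` with `a' ≥ a`, then from `β₁`
the prisoner can force the game to eventually reach `β₂ = shift a' β₁`. -/
theorem prisoner_forces_shift {n k : ℕ} (hn : 0 < n) (S : Set (Str n k))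
    (hS : ClosedUnderRot S) (α : Str n k) (hα : α ∈ S)
    (β₁ : Str n k) (hβ₁ : β₁ ∈ S) (a' : Fin k)
    (ha' : lastSym hn β₁ ≤ a') (hβ₂ : shift a' β₁ ∈ S) :
    ∃ m : ℕ, WinIn hn S (shift a' β₁) β₁ m := by
  have hWex : ∀ c' : Fin k,
      (c' < lastSym hn β₁ ∧ shift c' β₁ ∈ S ∧ shift c' β₁ ≠ shift a' β₁) →
      ∃ m, WinIn hn S (shift a' β₁) (shift c' β₁) m := by
    rintro c' ⟨h1', h2', -⟩
    exact forceShift hn hS _ β₁ c' a' (le_of_lt (lt_of_lt_of_le h1' ha')) h2' hβ₂ (le_refl _)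
  obtain ⟨M, hM⟩ := uniform_bound _ _ hWex
  exact ⟨M + 1, .passWin β₁ M a' ha' hβ₂ rfl (fun c' a b c'' => hM c' ⟨a, b, c''⟩)⟩


end UCG
end

section
/- In the Warden's Game on S ⊆ T(n,k) (closed under rotations) with goal α, define remoteness r(β) as the length of the game from β under optimal play (∞ if the warden can play forever), with r treated so that α as an end position has remoteness 0. If for some positive integer m no position has remoteness m, then no position has remoteness m+1. -/
namespace UCG

/-!
A winning strategy of length `t + 2` consists of a first move into positions of `S`
from which the prisoner wins within `t + 1` moves. If no position has remoteness
exactly `t + 1`, each of these positions is already won within `t` moves, so the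
same first move wins within `t + 1`. Thus remoteness `t + 2` cannot occur either.
-/

section
variable {n k : ℕ} {hn : 0 < n} {S : Set (Str n k)} {tgt β : Str n k}

theorem WinIn.succ {t : ℕ} (hw : WinIn hn S tgt β t) : WinIn hn S tgt β (t + 1) := by
  induction hw with
  | passWin β m c hc hcS heq _ ih =>
      exact .passWin β (m + 1) c hc hcS heq ih
  | passStep β m c hc hcS _ _ ih₁ ih₂ =>
      exact .passStep β (m + 1) c hc hcS ih₁ ih₂

theorem WinIn.mono {s t : ℕ} (hst : s ≤ t) (hw : WinIn hn S tgt β s) :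
    WinIn hn S tgt β t := by
  induction t, hst using Nat.le_induction with
  | base => exact hw
  | succ t _ ih => exact ih.succ

theorem WinIn.of_succ_succ {t : ℕ}
    (hsub : ∀ γ ∈ S, WinIn hn S tgt γ (t + 1) → WinIn hn S tgt γ t)
    (hw : WinIn hn S tgt β (t + 2)) : WinIn hn S tgt β (t + 1) := by
  cases hw with
  | passWin _ _ c hc hcS heq hW =>
      exact .passWin β t c hc hcS heq fun c' h₁ h₂ h₃ => hsub _ h₂ (hW c' h₁ h₂ h₃)
  | passStep _ _ c hc hcS hwin hW =>
      exact .passStep β t c hc hcS (hsub _ hcS hwin)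
        fun c' h₁ h₂ h₃ => hsub _ h₂ (hW c' h₁ h₂ h₃)

theorem remoteness_le_iff {t : ℕ} : remoteness hn S tgt β ≤ t ↔ WinIn hn S tgt β t := by
  refine ⟨fun hle => ?_, fun hw => sInf_le ⟨t, rfl, hw⟩⟩
  have hlt : remoteness hn S tgt β < ((t + 1 : ℕ) : ℕ∞) :=
    hle.trans_lt (by exact_mod_cast t.lt_succ_self)
  obtain ⟨_, ⟨s, rfl, hs⟩, hst⟩ := sInf_lt_iff.mp hlt
  exact hs.mono (Nat.lt_succ_iff.mp (by exact_mod_cast hst))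

theorem remoteness_eq_succ_iff {t : ℕ} :
    remoteness hn S tgt β = ((t + 1 : ℕ) : ℕ∞) ↔
      WinIn hn S tgt β (t + 1) ∧ ¬ WinIn hn S tgt β t := by
  rw [le_antisymm_iff, remoteness_le_iff, ← remoteness_le_iff (t := t), not_le,
    Nat.cast_add, Nat.cast_one, ENat.add_one_le_iff (ENat.natCast_ne_top t)]

end

theorem no_remoteness_gap_general {n k : ℕ} (hn : 0 < n) (S : Set (Str n k))
    (α : Str n k) (m : ℕ) (hm : 0 < m)
    (h : ∀ β ∈ S, remoteness hn S α β ≠ (m : ℕ∞)) :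
    ∀ β ∈ S, remoteness hn S α β ≠ ((m + 1 : ℕ) : ℕ∞) := by
  obtain ⟨t, rfl⟩ := Nat.exists_eq_add_one_of_ne_zero hm.ne'
  have hsub : ∀ γ ∈ S, WinIn hn S α γ (t + 1) → WinIn hn S α γ t := fun γ hγ hw =>
    by_contra fun hnw => h γ hγ (remoteness_eq_succ_iff.mpr ⟨hw, hnw⟩)
  intro β _ hβ
  obtain ⟨hw, hnw⟩ := remoteness_eq_succ_iff.mp hβ
  exact hnw (hw.of_succ_succ hsub)

/-- if no position in `S` has remoteness `m` (for `m > 0`), then no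
position has remoteness `m + 1`. -/
theorem no_remoteness_gap {n k : ℕ} (hn : 0 < n) (S : Set (Str n k))
    (hS : ClosedUnderRot S) (α : Str n k) (hα : α ∈ S) (m : ℕ) (hm : 0 < m)
    (h : ∀ β ∈ S, remoteness hn S α β ≠ (m : ℕ∞)) :
    ∀ β ∈ S, remoteness hn S α β ≠ ((m + 1 : ℕ) : ℕ∞) :=
  no_remoteness_gap_general hn S α m hm h

end UCG
end

section
/- In the Warden's Game on S ⊆ T(n,k) (closed under rotations) with goal α, if γa₁, γa₂ ∈ S with a₁ < a₂, then r(γa₁) ≤ r(γa₂), where r is the remoteness function (number of moves to α under optimal play, ∞ if the warden can avoid α forever). -/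
/-!
A position `γb` enters the game only through the successors `cγ`, which do not depend on `b`,
and through its last symbol `b`, which bounds the warden's moves from above and the prisoner's
from below. Lowering `b` therefore takes options away from the warden and gives them to the
prisoner, so any way for the prisoner to force `α` within `t` moves from `γa₂` also forces it
from `γa₁`.
-/

namespace UCG

theorem shift_eq_shift_of_eq_of_ne_last {n k : ℕ} {β₁ β₂ : Str n k}
    (h : ∀ i : Fin n, i.val ≠ n - 1 → β₁ i = β₂ i) (c : Fin k) :
    shift c β₁ = shift c β₂ := by
  funext i
  unfold shift
  split_ifs with hi
  · rfl
  · exact h _ (by simp only [ne_eq]; omega)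

theorem WinIn.of_lastSym_le {n k : ℕ} {hn : 0 < n} {S : Set (Str n k)} {tgt β₁ β₂ : Str n k}
    {t : ℕ} (hshift : ∀ c : Fin k, shift c β₁ = shift c β₂)
    (hle : lastSym hn β₁ ≤ lastSym hn β₂) (h : WinIn hn S tgt β₂ t) :
    WinIn hn S tgt β₁ t := by
  cases h with
  | passWin _ m c hc hcS heq hW =>
    refine .passWin _ m c (hle.trans hc) (hshift c ▸ hcS) (hshift c ▸ heq) fun c' hc' => ?_
    simpa only [hshift] using hW c' (hc'.trans_le hle)
  | passStep _ m c hc hcS hwin hW =>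
    refine .passStep _ m c (hle.trans hc) (hshift c ▸ hcS) (hshift c ▸ hwin) fun c' hc' => ?_
    simpa only [hshift] using hW c' (hc'.trans_le hle)

theorem remoteness_le_of_winIn {n k : ℕ} {hn : 0 < n} {S : Set (Str n k)} {tgt β₁ β₂ : Str n k}
    (h : ∀ t, WinIn hn S tgt β₂ t → WinIn hn S tgt β₁ t) :
    remoteness hn S tgt β₁ ≤ remoteness hn S tgt β₂ :=
  sInf_le_sInf fun _ ⟨t, he, hw⟩ => ⟨t, he, h t hw⟩

theorem remoteness_mono_last_general {n k : ℕ} (hn : 0 < n) (S : Set (Str n k))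
    (α : Str n k) (β₁ β₂ : Str n k)
    (hagree : ∀ i : Fin n, i.val ≠ n - 1 → β₁ i = β₂ i)
    (hlt : lastSym hn β₁ < lastSym hn β₂) :
    remoteness hn S α β₁ ≤ remoteness hn S α β₂ :=
  remoteness_le_of_winIn fun _ => WinIn.of_lastSym_le (shift_eq_shift_of_eq_of_ne_last hagree) hlt.le

/-- if `γa₁, γa₂ ∈ S` with `a₁ < a₂`, then `r(γa₁) ≤ r(γa₂)`. -/
theorem remoteness_mono_last {n k : ℕ} (hn : 0 < n) (S : Set (Str n k))
    (hS : ClosedUnderRot S) (α : Str n k) (hα : α ∈ S)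
    (β₁ β₂ : Str n k) (hβ₁ : β₁ ∈ S) (hβ₂ : β₂ ∈ S)
    (hagree : ∀ i : Fin n, i.val ≠ n - 1 → β₁ i = β₂ i)
    (hlt : lastSym hn β₁ < lastSym hn β₂) :
    remoteness hn S α β₁ ≤ remoteness hn S α β₂ :=
  remoteness_mono_last_general hn S α β₁ β₂ hagree hlt

end UCG
end

section
/- In the Warden's Game on S ⊆ T(n,k) (closed under rotations) with goal α, for every nonnegative integer m there is at most one position of remoteness exactly m. Consequently the positions of finite remoteness form a chain: optimal play from any winning position passes through every position of smaller remoteness. -/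
namespace UCG

section Aux

variable {n k : ℕ} {hn : 0 < n} {S : Set (Str n k)} {tgt : Str n k}

lemma win_zero {β : Str n k} : ¬ WinIn hn S tgt β 0 := fun h => by cases h

lemma win_succ {β : Str n k} {t : ℕ} (h : WinIn hn S tgt β t) :
    WinIn hn S tgt β (t + 1) := by
  induction h with
  | passWin β m c hc hcS heq hW ih => exact WinIn.passWin β (m+1) c hc hcS heq ih
  | passStep β m c hc hcS hwin hW ih1 ih2 => exact WinIn.passStep β (m+1) c hc hcS ih1 ih2

lemma win_le {β : Str n k} {t t' : ℕ} (h : WinIn hn S tgt β t) (htt : t ≤ t') :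
    WinIn hn S tgt β t' := by
  induction t', htt using Nat.le_induction with
  | base => exact h
  | succ t' _ ih => exact win_succ ih

lemma win_iff {β : Str n k} {m : ℕ} :
    WinIn hn S tgt β (m + 1) ↔
      ((∃ c, lastSym hn β ≤ c ∧ shift c β ∈ S ∧
          (shift c β = tgt ∨ WinIn hn S tgt (shift c β) m)) ∧
       (∀ c, c < lastSym hn β → shift c β ∈ S → shift c β ≠ tgt →
          WinIn hn S tgt (shift c β) m)) := by
  constructor
  · intro h
    cases h with
    | passWin β' m' c hc hcS heq hW => exact ⟨⟨c, hc, hcS, Or.inl heq⟩, hW⟩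
    | passStep β' m' c hc hcS hwin hW => exact ⟨⟨c, hc, hcS, Or.inr hwin⟩, hW⟩
  · rintro ⟨⟨c, hc, hcS, htw⟩, hW⟩
    rcases htw with heq | hwin
    · exact .passWin β m c hc hcS heq hW
    · exact .passStep β m c hc hcS hwin hW

lemma rem_eq_iff {β : Str n k} {m : ℕ} :
    remoteness hn S tgt β = (m : ℕ∞) ↔
      WinIn hn S tgt β m ∧ ∀ j, j < m → ¬ WinIn hn S tgt β j := by
  classical
  constructor
  · intro h
    have hex : ∃ t, WinIn hn S tgt β t := by
      by_contra hno
      push_neg at hno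
      have hempty : {e : ℕ∞ | ∃ t : ℕ, e = t ∧ WinIn hn S tgt β t} = ∅ := by
        ext e
        simp only [Set.mem_setOf_eq, Set.mem_empty_iff_false, iff_false, not_exists]
        rintro t ⟨rfl, hw⟩
        exact hno t hw
      rw [remoteness, hempty, sInf_empty] at h
      exact absurd h.symm (by simp)
    have h1 : remoteness hn S tgt β = ((Nat.find hex : ℕ) : ℕ∞) := by
      apply le_antisymm
      · exact sInf_le ⟨Nat.find hex, rfl, Nat.find_spec hex⟩
      · apply le_sInf
        rintro e ⟨t, rfl, hw⟩
        exact_mod_cast Nat.find_min' hex hw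
    rw [h] at h1
    have hm : m = Nat.find hex := by exact_mod_cast h1
    constructor
    · rw [hm]; exact Nat.find_spec hex
    · intro j hj
      exact Nat.find_min hex (by omega)
  · rintro ⟨hw, hmin⟩
    apply le_antisymm
    · exact sInf_le ⟨m, rfl, hw⟩
    · apply le_sInf
      rintro e ⟨t, rfl, hwt⟩
      have : m ≤ t := by
        by_contra hlt
        exact hmin t (by omega) hwt
      exact_mod_cast this

lemma rem_of_win {β : Str n k} {t : ℕ} (h : WinIn hn S tgt β t) :
    ∃ t₀, t₀ ≤ t ∧ 1 ≤ t₀ ∧ remoteness hn S tgt β = (t₀ : ℕ∞) := by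
  classical
  have hex : ∃ t, WinIn hn S tgt β t := ⟨t, h⟩
  refine ⟨Nat.find hex, Nat.find_min' hex h, ?_, ?_⟩
  · rcases Nat.eq_zero_or_pos (Nat.find hex) with h0 | h1
    · exact absurd (h0 ▸ Nat.find_spec hex) win_zero
    · exact h1
  · rw [rem_eq_iff]
    exact ⟨Nat.find_spec hex, fun j hj => Nat.find_min hex hj⟩

lemma win_of_rem {β : Str n k} {t₀ t : ℕ} (h : remoteness hn S tgt β = (t₀ : ℕ∞))
    (hle : t₀ ≤ t) : WinIn hn S tgt β t :=
  win_le (rem_eq_iff.1 h).1 hle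

def Pre (β β' : Str n k) : Prop := ∀ i : Fin n, (i : ℕ) < n - 1 → β i = β' i

lemma pre_refl {β : Str n k} : Pre β β := fun _ _ => rfl

lemma pre_symm {β β' : Str n k} (h : Pre β β') : Pre β' β := fun i hi => (h i hi).symm

lemma shift_congr {β β' : Str n k} (h : Pre β β') (c : Fin k) :
    shift c β = shift c β' := by
  funext i
  unfold shift
  by_cases h0 : (i : ℕ) = 0
  · rw [if_pos h0, if_pos h0]
  · rw [if_neg h0, if_neg h0]
    have hlt : (i : ℕ) - 1 < n - 1 := by have := i.isLt; omega
    exact h ⟨(i : ℕ) - 1, lt_of_le_of_lt (Nat.sub_le _ _) i.isLt⟩ hlt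

lemma shift_inj (hn : 0 < n) {c c' : Fin k} {β β' : Str n k}
    (h : shift c β = shift c' β') : c = c' ∧ Pre β β' := by
  constructor
  · have h0 := congrFun h ⟨0, hn⟩
    simpa [shift] using h0
  · intro i hi
    have h1 := congrFun h ⟨(i : ℕ) + 1, by have := i.isLt; omega⟩
    simp only [shift] at h1
    rw [if_neg (Nat.succ_ne_zero (i : ℕ)), if_neg (Nat.succ_ne_zero (i : ℕ))] at h1
    exact h1

lemma eq_of_pre_last {β β' : Str n k} (hpre : Pre β β')
    (hlast : lastSym hn β = lastSym hn β') : β = β' := by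
  funext i
  rcases lt_or_ge (i : ℕ) (n - 1) with h | h
  · exact hpre i h
  · have hi : i = ⟨n - 1, Nat.sub_lt hn one_pos⟩ := by
      apply Fin.ext
      have := i.isLt
      simp only []
      omega
    rw [hi]
    exact hlast

lemma rot_mem (hSrot : ClosedUnderRot S) {β : Str n k} (hβ : β ∈ S) :
    shift (lastSym hn β) β ∈ S := by
  apply hSrot β hβ
  refine ⟨n - 1, fun i => ?_⟩
  have hin := i.isLt
  unfold shift lastSym
  by_cases h0 : (i : ℕ) = 0
  · rw [if_pos h0]
    congr 1
    apply Fin.ext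
    simp only [h0, Nat.zero_add]
    rw [Nat.mod_eq_of_lt (by omega)]
  · rw [if_neg h0]
    congr 1
    apply Fin.ext
    simp only []
    have harith : (i : ℕ) + (n - 1) = ((i : ℕ) - 1) + n := by omega
    rw [harith, Nat.add_mod_right, Nat.mod_eq_of_lt (by omega)]

lemma mono_last {β β' : Str n k} (hpre : Pre β β')
    (hlast : lastSym hn β ≤ lastSym hn β') {t : ℕ}
    (h : WinIn hn S tgt β' t) : WinIn hn S tgt β t := by
  cases t with
  | zero => exact absurd h win_zero
  | succ m =>
    rw [win_iff] at h ⊢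
    obtain ⟨⟨c, hc, hcS, hw⟩, hW⟩ := h
    have he : ∀ c : Fin k, shift c β = shift c β' := shift_congr hpre
    constructor
    · exact ⟨c, le_trans hlast hc, by rw [he]; exact hcS, by rw [he]; exact hw⟩
    · intro c hlt hS' hne
      rw [he] at hS' hne ⊢
      exact hW c (lt_of_lt_of_le hlt hlast) hS' hne

lemma exists_tgt_opt {β : Str n k} (h : remoteness hn S tgt β = ((1 : ℕ) : ℕ∞)) :
    ∃ c, lastSym hn β ≤ c ∧ shift c β ∈ S ∧ shift c β = tgt := by
  have h1 := (rem_eq_iff.1 h).1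
  obtain ⟨⟨c, hc, hcS, hw⟩, hW⟩ := win_iff.1 h1
  rcases hw with heq | hwin
  · exact ⟨c, hc, hcS, heq⟩
  · exact absurd hwin win_zero

lemma exists_opt {β : Str n k} {m : ℕ} (hm : 1 ≤ m)
    (h : remoteness hn S tgt β = ((m + 1 : ℕ) : ℕ∞)) :
    ∃ c, shift c β ∈ S ∧ shift c β ≠ tgt ∧ remoteness hn S tgt (shift c β) = (m : ℕ∞) := by
  obtain ⟨hw, hmin⟩ := rem_eq_iff.1 h
  obtain ⟨⟨c, hc, hcS, hcw⟩, hW⟩ := win_iff.1 hw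
  by_contra hno
  push_neg at hno
  apply hmin m (by omega)
  obtain ⟨m', rfl⟩ : ∃ m', m = m' + 1 := ⟨m - 1, by omega⟩
  rw [win_iff]
  constructor
  · refine ⟨c, hc, hcS, ?_⟩
    rcases hcw with heq | hwin
    · exact Or.inl heq
    · by_cases hne : shift c β = tgt
      · exact Or.inl hne
      · right
        obtain ⟨t₀, ht₀le, _, ht₀⟩ := rem_of_win hwin
        have hne2 : t₀ ≠ m' + 1 := fun he => hno c hcS hne (he ▸ ht₀)
        exact win_of_rem ht₀ (by omega)
  · intro c' hlt hS' hne
    obtain ⟨t₀, ht₀le, _, ht₀⟩ := rem_of_win (hW c' hlt hS' hne)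
    have hne2 : t₀ ≠ m' + 1 := fun he => hno c' hS' hne (he ▸ ht₀)
    exact win_of_rem ht₀ (by omega)

lemma chain_exists {β : Str n k} {m : ℕ} (hβ : β ∈ S)
    (h : remoteness hn S tgt β = (m : ℕ∞)) :
    ∀ m', 1 ≤ m' → m' ≤ m → ∃ δ ∈ S, remoteness hn S tgt δ = (m' : ℕ∞) := by
  suffices H : ∀ d m', 1 ≤ m' → ∀ δ, δ ∈ S → remoteness hn S tgt δ = ((m' + d : ℕ) : ℕ∞) →
      ∃ δ' ∈ S, remoteness hn S tgt δ' = (m' : ℕ∞) by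
    intro m' h1 h2
    refine H (m - m') m' h1 β hβ ?_
    rw [h]
    congr 1
    omega
  intro d
  induction d with
  | zero => intro m' h1 δ hδ hr; exact ⟨δ, hδ, hr⟩
  | succ d ih =>
    intro m' h1 δ hδ hr
    have hr' : remoteness hn S tgt δ = ((m' + d + 1 : ℕ) : ℕ∞) := by
      rw [hr]; congr 1
    obtain ⟨c, hcS, hne, hrc⟩ := exists_opt (by omega) hr'
    exact ih m' h1 _ hcS hrc

def UsedAt (hn : 0 < n) (S : Set (Str n k)) (tgt : Str n k) (j : ℕ) (δ : Str n k) : Prop :=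
  (j = 0 ∧ δ = tgt) ∨ (1 ≤ j ∧ remoteness hn S tgt δ = (j : ℕ∞))

lemma usedAt_opt {j t : ℕ} {δ : Str n k} (h : UsedAt hn S tgt j δ) (hjt : j ≤ t) :
    δ = tgt ∨ WinIn hn S tgt δ t := by
  rcases h with ⟨_, rfl⟩ | ⟨h1, hr⟩
  · exact Or.inl rfl
  · exact Or.inr (win_of_rem hr hjt)

lemma usedAt_of_or {δ : Str n k} {t : ℕ} (h : δ = tgt ∨ WinIn hn S tgt δ t) :
    ∃ j, j ≤ t ∧ UsedAt hn S tgt j δ := by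
  rcases h with rfl | hw
  · exact ⟨0, Nat.zero_le _, Or.inl ⟨rfl, rfl⟩⟩
  · obtain ⟨j, hle, h1, hr⟩ := rem_of_win hw
    exact ⟨j, hle, Or.inr ⟨h1, hr⟩⟩

def UniqBelow (hn : 0 < n) (S : Set (Str n k)) (tgt : Str n k) (N : ℕ) : Prop :=
  ∀ j, 1 ≤ j → j ≤ N → ∀ β₁, β₁ ∈ S → ∀ β₂, β₂ ∈ S →
    remoteness hn S tgt β₁ = (j : ℕ∞) → remoteness hn S tgt β₂ = (j : ℕ∞) → β₁ = β₂

/-- Successor lemma: from a position of remoteness `N+1` and a used option at level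
`j ≤ N`, produce a remoteness-`j+1` position sharing the prefix. -/
lemma suc {N : ℕ} (hU : UniqBelow hn S tgt N) {β : Str n k} (hβ : β ∈ S)
    (hrβ : remoteness hn S tgt β = ((N + 1 : ℕ) : ℕ∞))
    {j : ℕ} (hj : j ≤ N) {cγ : Fin k} (hγS : shift cγ β ∈ S)
    (hγ : UsedAt hn S tgt j (shift cγ β)) :
    ∃ σ, σ ∈ S ∧ remoteness hn S tgt σ = ((j + 1 : ℕ) : ℕ∞) ∧ Pre σ β ∧
      lastSym hn σ ≤ lastSym hn β := by
  rcases eq_or_lt_of_le hj with rfl | hjN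
  · exact ⟨β, hβ, hrβ, pre_refl, le_refl _⟩
  · obtain ⟨σ, hσS, hσr⟩ := chain_exists hβ hrβ (j + 1) (by omega) (by omega)
    have hopt : ∃ g, shift g σ = shift cγ β := by
      rcases Nat.eq_zero_or_pos j with rfl | hj1
      · obtain ⟨g, _, _, hg⟩ := exists_tgt_opt hσr
        rcases hγ with ⟨_, htgt⟩ | ⟨h1, _⟩
        · exact ⟨g, hg.trans htgt.symm⟩
        · omega
      · obtain ⟨g, hgS, hgne, hgr⟩ := exists_opt hj1 hσr
        have hγr : remoteness hn S tgt (shift cγ β) = (j : ℕ∞) := by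
          rcases hγ with ⟨h0, _⟩ | ⟨_, hr⟩
          · omega
          · exact hr
        exact ⟨g, hU j hj1 (by omega) _ hgS _ hγS hgr hγr⟩
    obtain ⟨g, hg⟩ := hopt
    obtain ⟨-, hpre⟩ := shift_inj hn hg
    refine ⟨σ, hσS, hσr, hpre, ?_⟩
    by_contra hlt
    push_neg at hlt
    have hwβ : WinIn hn S tgt β (j + 1) :=
      mono_last (pre_symm hpre) (le_of_lt hlt) (win_of_rem hσr (le_refl _))
    exact (rem_eq_iff.1 hrβ).2 (j + 1) (by omega) hwβ

/-- The diamond lemma: a remoteness-`N+1` position cannot have both its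
last-symbol rotation used at a level `≤ N` and a strictly larger option used at
a level `≤ N`. -/
lemma diamond (hSrot : ClosedUnderRot S) {N : ℕ} (hU : UniqBelow hn S tgt N)
    {β : Str n k} (hβ : β ∈ S)
    (hrβ : remoteness hn S tgt β = ((N + 1 : ℕ) : ℕ∞))
    {p q : ℕ} (hp : p ≤ N) (hq : q ≤ N)
    (hpu : UsedAt hn S tgt p (shift (lastSym hn β) β))
    {c : Fin k} (hbc : lastSym hn β < c) (hcS : shift c β ∈ S)
    (hqu : UsedAt hn S tgt q (shift c β)) : False := by
  have hbS : shift (lastSym hn β) β ∈ S := rot_mem hSrot hβ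
  rcases lt_trichotomy p q with hlt | heq | hlt
  · -- p < q : use the successor of level q
    obtain ⟨q', rfl⟩ : ∃ q', q = q' + 1 := ⟨q - 1, by omega⟩
    obtain ⟨σ, hσS, hσr, hpre, hle⟩ := suc hU hβ hrβ hq hcS hqu
    have hnw : ¬ WinIn hn S tgt σ (q' + 1) := (rem_eq_iff.1 hσr).2 (q' + 1) (by omega)
    have hww : WinIn hn S tgt σ (q' + 1 + 1) := win_of_rem hσr (le_refl _)
    have hsh : ∀ x : Fin k, shift x σ = shift x β := shift_congr hpre
    rw [win_iff] at hnw
    rcases not_and_or.mp hnw with hnp | hnwd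
    · push_neg at hnp
      have h1 : shift (lastSym hn β) σ ∈ S := by rw [hsh]; exact hbS
      have h2 := hnp (lastSym hn β) hle h1
      rw [hsh] at h2
      rcases usedAt_opt (t := q') hpu (by omega) with htgt | hwn
      · exact h2.1 htgt
      · exact h2.2 hwn
    · push_neg at hnwd
      obtain ⟨f, hf, hfS, hfne, hfnw⟩ := hnwd
      have hwc : WinIn hn S tgt (shift f σ) (q' + 1) := (win_iff.1 hww).2 f hf hfS hfne
      obtain ⟨t₀, ht₀le, ht₀1, ht₀⟩ := rem_of_win hwc
      have ht₀e : t₀ = q' + 1 := by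
        by_contra hne2
        exact hfnw (win_of_rem ht₀ (by omega))
      have hqr : remoteness hn S tgt (shift c β) = ((q' + 1 : ℕ) : ℕ∞) := by
        rcases hqu with ⟨h0, _⟩ | ⟨_, hr⟩
        · omega
        · exact hr
      have heqopt : shift f σ = shift c β :=
        hU (q' + 1) (by omega) (by omega) _ hfS _ hcS (ht₀e ▸ ht₀) hqr
      rw [hsh] at heqopt
      obtain ⟨hfc, -⟩ := shift_inj hn heqopt
      have : f < c := lt_of_lt_of_le hf (le_trans hle (le_of_lt hbc))
      exact absurd hfc (ne_of_lt this)
  · -- p = q : the two used options coincide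
    subst heq
    have heqopt : shift (lastSym hn β) β = shift c β := by
      rcases hpu with ⟨h0, htgt1⟩ | ⟨h1, hr1⟩
      · rcases hqu with ⟨_, htgt2⟩ | ⟨h2, _⟩
        · exact htgt1.trans htgt2.symm
        · omega
      · rcases hqu with ⟨h0, _⟩ | ⟨_, hr2⟩
        · omega
        · exact hU p h1 hp _ hbS _ hcS hr1 hr2
    obtain ⟨heqc, -⟩ := shift_inj hn heqopt
    exact absurd heqc (ne_of_lt hbc)
  · -- q < p : use the successor of level p
    obtain ⟨p', rfl⟩ : ∃ p', p = p' + 1 := ⟨p - 1, by omega⟩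
    obtain ⟨σ, hσS, hσr, hpre, hle⟩ := suc hU hβ hrβ hp hbS hpu
    have hnw : ¬ WinIn hn S tgt σ (p' + 1) := (rem_eq_iff.1 hσr).2 (p' + 1) (by omega)
    have hww : WinIn hn S tgt σ (p' + 1 + 1) := win_of_rem hσr (le_refl _)
    have hsh : ∀ x : Fin k, shift x σ = shift x β := shift_congr hpre
    rw [win_iff] at hnw
    rcases not_and_or.mp hnw with hnp | hnwd
    · push_neg at hnp
      have h1 : shift c σ ∈ S := by rw [hsh]; exact hcS
      have h2 := hnp c (le_trans hle (le_of_lt hbc)) h1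
      rw [hsh] at h2
      rcases usedAt_opt (t := p') hqu (by omega) with htgt | hwn
      · exact h2.1 htgt
      · exact h2.2 hwn
    · push_neg at hnwd
      obtain ⟨f, hf, hfS, hfne, hfnw⟩ := hnwd
      have hwc : WinIn hn S tgt (shift f σ) (p' + 1) := (win_iff.1 hww).2 f hf hfS hfne
      obtain ⟨t₀, ht₀le, ht₀1, ht₀⟩ := rem_of_win hwc
      have ht₀e : t₀ = p' + 1 := by
        by_contra hne2
        exact hfnw (win_of_rem ht₀ (by omega))
      have hpr : remoteness hn S tgt (shift (lastSym hn β) β) = ((p' + 1 : ℕ) : ℕ∞) := by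
        rcases hpu with ⟨h0, _⟩ | ⟨_, hr⟩
        · omega
        · exact hr
      have heqopt : shift f σ = shift (lastSym hn β) β :=
        hU (p' + 1) (by omega) (by omega) _ hfS _ hbS (ht₀e ▸ ht₀) hpr
      rw [hsh] at heqopt
      obtain ⟨hfb, -⟩ := shift_inj hn heqopt
      exact absurd hfb (ne_of_lt (lt_of_lt_of_le hf hle))

/-- Two distinct positions of equal remoteness `N+1` sharing a prefix, with
strictly smaller last symbol on the first, are impossible. -/
lemma kill (hSrot : ClosedUnderRot S) {N : ℕ} (hU : UniqBelow hn S tgt N)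
    {β₁ β₂ : Str n k} (h1 : β₁ ∈ S) (h2 : β₂ ∈ S)
    (hr1 : remoteness hn S tgt β₁ = ((N + 1 : ℕ) : ℕ∞))
    (hr2 : remoteness hn S tgt β₂ = ((N + 1 : ℕ) : ℕ∞))
    (hpre : Pre β₁ β₂) (hlt : lastSym hn β₁ < lastSym hn β₂) : False := by
  have hsh : ∀ x : Fin k, shift x β₂ = shift x β₁ := shift_congr (pre_symm hpre)
  obtain ⟨⟨cw, hcw, hcwS, hcww⟩, hW⟩ := win_iff.1 (win_of_rem hr2 (le_refl _))
  -- the rotation of β₁ is a warden option of β₂, hence used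
  have hbS : shift (lastSym hn β₁) β₁ ∈ S := rot_mem hSrot h1
  have hbor : shift (lastSym hn β₁) β₁ = tgt ∨
      WinIn hn S tgt (shift (lastSym hn β₁) β₁) N := by
    by_cases htgt : shift (lastSym hn β₁) β₁ = tgt
    · exact Or.inl htgt
    · right
      have := hW (lastSym hn β₁) hlt (by rw [hsh]; exact hbS) (by rw [hsh]; exact htgt)
      rw [hsh] at this
      exact this
  obtain ⟨p, hpN, hpu⟩ := usedAt_of_or hbor
  -- the prisoner witness of β₂ is a used option above lastSym β₂ > lastSym β₁
  rw [hsh] at hcwS hcww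
  obtain ⟨q, hqN, hqu⟩ := usedAt_of_or hcww
  exact diamond hSrot hU h1 hr1 hpN hqN hpu (lt_of_lt_of_le hlt hcw) hcwS hqu

lemma uniq (hSrot : ClosedUnderRot S) : ∀ m : ℕ, ∀ β₁, β₁ ∈ S → ∀ β₂, β₂ ∈ S →
    remoteness hn S tgt β₁ = (m : ℕ∞) → remoteness hn S tgt β₂ = (m : ℕ∞) → β₁ = β₂ := by
  intro m
  induction m using Nat.strong_induction_on with
  | _ m ih =>
    cases m with
    | zero =>
      intro β₁ _ β₂ _ hr1 _
      exact absurd ((rem_eq_iff.1 hr1).1) win_zero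
    | succ N =>
      intro β₁ h1 β₂ h2 hr1 hr2
      have hU : UniqBelow hn S tgt N := fun j hj1 hj2 => ih j (by omega)
      have hcom : ∃ c₁ c₂ : Fin k, shift c₁ β₁ = shift c₂ β₂ := by
        rcases Nat.eq_zero_or_pos N with rfl | hN
        · obtain ⟨c₁, _, _, e₁⟩ := exists_tgt_opt hr1
          obtain ⟨c₂, _, _, e₂⟩ := exists_tgt_opt hr2
          exact ⟨c₁, c₂, e₁.trans e₂.symm⟩
        · obtain ⟨c₁, hS1, hne1, hrc1⟩ := exists_opt hN hr1
          obtain ⟨c₂, hS2, hne2, hrc2⟩ := exists_opt hN hr2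
          exact ⟨c₁, c₂, ih N (by omega) _ hS1 _ hS2 hrc1 hrc2 ▸ rfl⟩
      obtain ⟨c₁, c₂, hcc⟩ := hcom
      obtain ⟨-, hpre⟩ := shift_inj hn hcc
      rcases lt_trichotomy (lastSym hn β₁) (lastSym hn β₂) with hlt | heq | hlt
      · exact absurd (kill hSrot hU h1 h2 hr1 hr2 hpre hlt) not_false
      · exact eq_of_pre_last hpre heq
      · exact absurd (kill hSrot hU h2 h1 hr2 hr1 (pre_symm hpre) hlt) not_false

end Aux

/-- for each `m` there is at most one position of remoteness `m`, and
optimal play from a position of remoteness `m` passes through a (unique) position of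
each remoteness `m'` with `1 ≤ m' ≤ m`. -/
theorem remoteness_unique {n k : ℕ} (hn : 0 < n) (S : Set (Str n k))
    (hS : ClosedUnderRot S) (α : Str n k) (hα : α ∈ S) :
    (∀ m : ℕ, ∀ β₁ ∈ S, ∀ β₂ ∈ S,
      remoteness hn S α β₁ = (m : ℕ∞) → remoteness hn S α β₂ = (m : ℕ∞) → β₁ = β₂) ∧
    (∀ β ∈ S, ∀ m : ℕ, remoteness hn S α β = (m : ℕ∞) →
      ∀ m' : ℕ, 1 ≤ m' → m' ≤ m → ∃ β' ∈ S, remoteness hn S α β' = (m' : ℕ∞)) := by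
  constructor
  · intro m β₁ h1 β₂ h2 e1 e2
    exact uniq hS m β₁ h1 β₂ h2 e1 e2
  · intro β hβ m h m' h1 h2
    exact chain_exists hβ h m' h1 h2

end UCG
end
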